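/- Let G be a finite group with Sylow 2-subgroup S satisfying Real(S) ⊆ Z(S), and suppose every non-central real element x of G satisfies |x^G|₂ = 2^a for a fixed a ≥ 1 (all non-central real class sizes have the same 2-part, which is even). Then every nontrivial real element of G of 2-power order is a central involution of G. -/

import Mathlib

/-- An element `x` of a group is *real* if it is conjugate to its inverse. -/
def IsRealEl (G : Type*) [Group G] (x : G) : Prop := ∃ g : G, g⁻¹ * x * g = x⁻¹

/-- The size of the conjugacy class of `x` in `G`. -/
noncomputable def clSize (G : Type*) [Group G] (x : G) : ℕ := Nat.card {y : G // IsConj x y}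

/-!
Let `y` be a real element of `2`-power order. Replacing an inverting element by its `2`-part
(an odd power of it still inverts `y`), `y` and its inverting element generate a `2`-group,
which can be conjugated into `S`. The conjugate of `y` is then real in `S`, hence central in `S`,
so its class size is odd. Since all non-central real classes have even size, it is central in `G`,
and a central real element is an involution (or trivial).
-/

open Subgroup

section

variable {G : Type*} [Group G]

lemma conj_pow_odd_eq_inv {x g : G} (hg : g⁻¹ * x * g = x⁻¹) {n : ℕ} (hn : Odd n) :
    (g ^ n)⁻¹ * x * g ^ n = x⁻¹ := by
  have hg' : g⁻¹ * x⁻¹ * g = x := by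
    calc g⁻¹ * x⁻¹ * g = (g⁻¹ * x * g)⁻¹ := by group
      _ = x := by rw [hg, inv_inv]
  have hsq : (g ^ 2)⁻¹ * x * g ^ 2 = x := by
    calc (g ^ 2)⁻¹ * x * g ^ 2 = g⁻¹ * (g⁻¹ * x * g) * g := by rw [sq]; group
      _ = x := by rw [hg, hg']
  obtain ⟨k, rfl⟩ := hn
  induction k with
  | zero => simpa using hg
  | succ k ih =>
    calc (g ^ (2 * (k + 1) + 1))⁻¹ * x * g ^ (2 * (k + 1) + 1)
        = (g ^ (2 * k + 1))⁻¹ * ((g ^ 2)⁻¹ * x * g ^ 2) * g ^ (2 * k + 1) := by group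
      _ = x⁻¹ := by rw [hsq, ih]

lemma IsRealEl.map {H : Type*} [Group H] {x : G} (hx : IsRealEl G x) (f : G →* H) :
    IsRealEl H (f x) := by
  obtain ⟨g, hg⟩ := hx
  exact ⟨f g, by rw [← map_inv, ← map_mul, ← map_mul, hg, map_inv]⟩

lemma IsRealEl.sq_eq_one_of_mem_center {x : G} (hx : IsRealEl G x) (hc : x ∈ center G) :
    x ^ 2 = 1 := by
  obtain ⟨g, hg⟩ := hx
  rw [mul_assoc, ← mem_center_iff.mp hc g, inv_mul_cancel_left] at hg
  rw [sq, mul_eq_one_iff_eq_inv, ← hg]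

lemma IsRealEl.exists_two_power_order_conj_eq_inv [Finite G] {x : G} (hx : IsRealEl G x) :
    ∃ t : G, (∃ k, orderOf t = 2 ^ k) ∧ t⁻¹ * x * t = x⁻¹ := by
  obtain ⟨g, hg⟩ := hx
  have hne : orderOf g ≠ 0 := (orderOf_pos g).ne'
  have hpos : 0 < ordCompl[2] (orderOf g) := Nat.ordCompl_pos 2 hne
  refine ⟨g ^ ordCompl[2] (orderOf g), ⟨(orderOf g).factorization 2, ?_⟩,
    conj_pow_odd_eq_inv hg ?_⟩
  · rw [orderOf_pow_of_dvd hpos.ne' (Nat.ordCompl_dvd _ _)]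
    exact Nat.div_eq_of_eq_mul_left hpos (Nat.ordProj_mul_ordCompl_eq_self _ _).symm
  · exact Nat.odd_iff.mpr (Nat.two_dvd_ne_zero.mp (Nat.not_dvd_ordCompl Nat.prime_two hne))

lemma zpowers_le_normalizer_of_conj_eq_inv [Finite G] {x t : G} (ht : t⁻¹ * x * t = x⁻¹) :
    zpowers t ≤ normalizer (zpowers x : Set G) := by
  have ht' : t * x * t⁻¹ = x⁻¹ := by
    calc t * x * t⁻¹ = t * (x⁻¹)⁻¹ * t⁻¹ := by rw [inv_inv]
      _ = t * (t⁻¹ * x * t)⁻¹ * t⁻¹ := by rw [ht]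
      _ = x⁻¹ := by group
  rw [zpowers_le]
  refine mem_normalizer_fintype fun y ⟨n, hn⟩ => ⟨-n, ?_⟩
  simp only [← hn, ← conj_zpow, ht', zpow_neg, inv_zpow]

lemma IsPGroup.exists_conj_mem_sylow {p : ℕ} [Fact p.Prime] [Finite G] {H : Subgroup G}
    (hH : IsPGroup p H) (S : Sylow p G) : ∃ g : G, ∀ h ∈ H, g * h * g⁻¹ ∈ S := by
  obtain ⟨Q, hQ⟩ := hH.exists_le_sylow
  obtain ⟨g, rfl⟩ := MulAction.exists_smul_eq G Q S
  exact ⟨g, fun h hh => smul_mem_pointwise_smul h (MulAut.conj g) Q (hQ hh)⟩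

lemma exists_conj_mem_sylow_isRealEl [Finite G] (S : Sylow 2 G) {y : G} (hy : IsRealEl G y)
    (hk : ∃ k, orderOf y = 2 ^ k) :
    ∃ g : G, ∃ hg : g * y * g⁻¹ ∈ S, IsRealEl S ⟨g * y * g⁻¹, hg⟩ := by
  obtain ⟨k, hk⟩ := hk
  obtain ⟨t, ⟨j, hj⟩, hty⟩ := hy.exists_two_power_order_conj_eq_inv
  have h2 : IsPGroup 2 (zpowers y ⊔ zpowers t : Subgroup G) :=
    IsPGroup.to_sup_of_normal_left' (.of_card (by rw [Nat.card_zpowers, hk]))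
      (.of_card (by rw [Nat.card_zpowers, hj])) (zpowers_le_normalizer_of_conj_eq_inv hty)
  obtain ⟨g, hg⟩ := h2.exists_conj_mem_sylow S
  refine ⟨g, hg y (mem_sup_left (mem_zpowers y)),
    ⟨g * t * g⁻¹, hg t (mem_sup_right (mem_zpowers t))⟩, Subtype.ext ?_⟩
  calc (g * t * g⁻¹)⁻¹ * (g * y * g⁻¹) * (g * t * g⁻¹) = g * (t⁻¹ * y * t) * g⁻¹ := by group
    _ = (g * y * g⁻¹)⁻¹ := by rw [hty]; group

lemma clSize_eq_index_centralizer (x : G) : clSize G x = (centralizer {x}).index := by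
  rw [centralizer_eq_comap_stabilizer]
  refine .trans ?_ (index_comap_of_surjective _ (f := ConjAct.toConjAct.toMonoidHom)
    ConjAct.toConjAct.surjective).symm
  show clSize G x = (MulAction.stabilizer (ConjAct G) x).index
  rw [MulAction.index_stabilizer, ← Nat.card_coe_set_eq]
  exact Nat.card_congr (Equiv.subtypeEquivRight fun y => by
    rw [ConjAct.mem_orbit_conjAct, isConj_comm])

lemma not_dvd_clSize_of_sylow_le_centralizer {p : ℕ} [Fact p.Prime] [Finite G] {x : G}
    (S : Sylow p G) (hS : (S : Subgroup G) ≤ centralizer {x}) : ¬ p ∣ clSize G x := by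
  rw [clSize_eq_index_centralizer]
  exact fun h => S.not_dvd_index (h.trans (index_dvd_of_le hS))

lemma le_centralizer_of_mem_center {H : Subgroup G} {x : H} (hx : x ∈ center H) :
    H ≤ centralizer {(x : G)} := fun h hh => by
  rw [mem_centralizer_singleton_iff]
  exact congrArg Subtype.val (mem_center_iff.mp hx ⟨h, hh⟩)

end

theorem stmt_19 {G : Type*} [Group G] [Finite G] (S : Sylow 2 G)
    (hreal : ∀ x : (S : Subgroup G), IsRealEl (S : Subgroup G) x →
      x ∈ Subgroup.center (S : Subgroup G))
    (a : ℕ) (ha : 1 ≤ a)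
    (h2part : ∀ x : G, IsRealEl G x → x ∉ Subgroup.center G →
      (clSize G x).factorization 2 = a) :
    ∀ y : G, IsRealEl G y → y ≠ 1 → (∃ k : ℕ, orderOf y = 2 ^ k) →
      y ^ 2 = 1 ∧ y ∈ Subgroup.center G := by
  intro y hy _ hk
  obtain ⟨g, hgS, hgy⟩ := exists_conj_mem_sylow_isRealEl S hy hk
  have hconj : g * y * g⁻¹ ∈ center G := by
    have hgyG : IsRealEl G (g * y * g⁻¹) := hgy.map (S : Subgroup G).subtype
    by_contra hnc
    refine not_dvd_clSize_of_sylow_le_centralizer S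
      (le_centralizer_of_mem_center (hreal _ hgy)) (Nat.dvd_of_factorization_pos ?_)
    rw [h2part _ hgyG hnc]
    omega
  have hyZ : y ∈ center G := by
    simpa [mul_assoc] using Normal.conj_mem inferInstance _ hconj g⁻¹
  exact ⟨hy.sq_eq_one_of_mem_center hyZ, hyZ⟩
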